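/- arXiv:1611.08254 — 4 statements merged into one kernel-verified Lean document; each statement's English description precedes it below -/
import Mathlib

section
/- Under the same triple-junction relations (τ¹+τ²+τ³=0, ν^i=Rτ^i, and λ^iτ^i+k^iν^i independent of i), one has Σ_{i=1}^3 (k^i)² = Σ_{i=1}^3 (λ^i)² and Σ_{i=1}^3 k^iλ^i = 0. -/
open Real

/-- At a regular triple junction (unit tangents summing to zero, `νⁱ = Rτⁱ` the π/2-rotation,
and the velocity vectors `λⁱτⁱ + kⁱνⁱ` independent of `i`), the vectors `K = (k¹,k²,k³)` and
`Λ = (λ¹,λ²,λ³)` in ℝ³ have equal norms and are orthogonal. -/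
theorem triple_junction_norm_orthogonality
    (τ : Fin 3 → ℝ × ℝ) (k lam : Fin 3 → ℝ)
    (hunit : ∀ i, (τ i).1 ^ 2 + (τ i).2 ^ 2 = 1)
    (hsum : τ 0 + τ 1 + τ 2 = 0)
    (hvel : ∀ i j : Fin 3,
      lam i • τ i + k i • (-(τ i).2, (τ i).1) =
      lam j • τ j + k j • (-(τ j).2, (τ j).1)) :
    (∑ i : Fin 3, (k i) ^ 2) = (∑ i : Fin 3, (lam i) ^ 2) ∧
    (∑ i : Fin 3, k i * lam i) = 0 := by
  have u1 := hunit 0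
  have u2 := hunit 1
  have u3 := hunit 2
  have hs1 : (τ 0).1 + (τ 1).1 + (τ 2).1 = 0 := by
    have := congrArg Prod.fst hsum; simpa using this
  have hs2 : (τ 0).2 + (τ 1).2 + (τ 2).2 = 0 := by
    have := congrArg Prod.snd hsum; simpa using this
  have e1 : lam 1 * (τ 1).1 - k 1 * (τ 1).2 = lam 0 * (τ 0).1 - k 0 * (τ 0).2 := by
    have := congrArg Prod.fst (hvel 1 0); simp at this; linarith
  have e2 : lam 1 * (τ 1).2 + k 1 * (τ 1).1 = lam 0 * (τ 0).2 + k 0 * (τ 0).1 := by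
    have := congrArg Prod.snd (hvel 1 0); simp at this; linarith
  have e3 : lam 2 * (τ 2).1 - k 2 * (τ 2).2 = lam 0 * (τ 0).1 - k 0 * (τ 0).2 := by
    have := congrArg Prod.fst (hvel 2 0); simp at this; linarith
  have e4 : lam 2 * (τ 2).2 + k 2 * (τ 2).1 = lam 0 * (τ 0).2 + k 0 * (τ 0).1 := by
    have := congrArg Prod.snd (hvel 2 0); simp at this; linarith
  set a := (τ 0).1 with hadef
  set b := (τ 0).2 with hbdef
  set c := (τ 1).1 with hcdef
  set d := (τ 1).2 with hddef
  set e := (τ 2).1 with hedef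
  set f := (τ 2).2 with hfdef
  have he : e = -a - c := by linarith
  have hf : f = -b - d := by linarith
  rw [he, hf] at e3 e4 u3
  -- τ⁰·τ¹ = -1/2
  have h : a * c + b * d = -1/2 := by linear_combination (u3 - u1 - u2) / 2
  -- the two quadratic identities for the three tangent directions
  have S1 : a^2 - b^2 + c^2 - d^2 + (-a-c)^2 - (-b-d)^2 = 0 := by
    linear_combination 4*(a*c - b*d)*h - 2*(c^2 - d^2)*u1 - 2*(a^2 - b^2)*u2
  have S2 : a*b + c*d + (-a-c)*(-b-d) = 0 := by
    linear_combination 2*(a*d + b*c)*h - 2*c*d*u1 - 2*a*b*u2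
  -- express lam i and k i via the common velocity v = (p, q)
  have hl0 : lam 0 = (lam 0 * a - k 0 * b) * a + (lam 0 * b + k 0 * a) * b := by
    linear_combination -lam 0 * u1
  have hk0 : k 0 = -(lam 0 * a - k 0 * b) * b + (lam 0 * b + k 0 * a) * a := by
    linear_combination -k 0 * u1
  have hl1 : lam 1 = (lam 0 * a - k 0 * b) * c + (lam 0 * b + k 0 * a) * d := by
    linear_combination c * e1 + d * e2 - lam 1 * u2
  have hk1 : k 1 = -(lam 0 * a - k 0 * b) * d + (lam 0 * b + k 0 * a) * c := by
    linear_combination (-d) * e1 + c * e2 - k 1 * u2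
  have hl2 : lam 2 = (lam 0 * a - k 0 * b) * (-a-c) + (lam 0 * b + k 0 * a) * (-b-d) := by
    linear_combination (-a-c) * e3 + (-b-d) * e4 - lam 2 * u3
  have hk2 : k 2 = -(lam 0 * a - k 0 * b) * (-b-d) + (lam 0 * b + k 0 * a) * (-a-c) := by
    linear_combination (-(-b-d)) * e3 + (-a-c) * e4 - k 2 * u3
  constructor
  · rw [Fin.sum_univ_three, Fin.sum_univ_three, hl0, hk0, hl1, hk1, hl2, hk2]
    linear_combination ((lam 0 * b + k 0 * a)^2 - (lam 0 * a - k 0 * b)^2) * S1 -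
      4 * (lam 0 * a - k 0 * b) * (lam 0 * b + k 0 * a) * S2
  · rw [Fin.sum_univ_three, hl0, hk0, hl1, hk1, hl2, hk2]
    linear_combination ((lam 0 * b + k 0 * a)^2 - (lam 0 * a - k 0 * b)^2) * S2 +
      (lam 0 * a - k 0 * b) * (lam 0 * b + k 0 * a) * S1
end

section
/- Let g:[0,T)→(0,∞) be a C¹ function with g'(t) ≤ C(1+g(t))³ for a constant C>0, and suppose limsup_{t→T} g(t) = +∞. Then lim_{t→T} g(t) = +∞ and there is a constant c>0 such that g(t) ≥ c/√(T−t) for all t∈[0,T). -/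
/-!
The inequality `g' ≤ C (1 + g)³` says exactly that `(1 + g t)⁻² + 2 C t` is nondecreasing.
Comparing its values at `t` and at points `s → T` where `g s → ∞` gives
`(1 + g t)⁻² ≤ 2 C (T - t)`, i.e. `1 + g t ≥ 1 / √(2 C (T - t))`. This forces `g → ∞`, so the
continuous positive `g` is bounded below on `[0, T)` by some `m > 0`, which absorbs the `1`.
-/

open Real Filter Set Topology

theorem inv_sqrt_le_of_inv_sq_le {x y : ℝ} (hy : 0 < y) (h : (y ^ 2)⁻¹ ≤ x) : (√x)⁻¹ ≤ y := by
  have : y⁻¹ ≤ √x := by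
    rw [← sqrt_sq (inv_pos.2 hy).le, inv_pow]
    exact sqrt_le_sqrt h
  simpa using inv_anti₀ (inv_pos.2 hy) this

theorem tendsto_div_sqrt_sub_nhdsLT {c : ℝ} (hc : 0 < c) (T : ℝ) :
    Tendsto (fun t => c / √(T - t)) (𝓝[<] T) atTop := by
  have : Tendsto (fun t => √(T - t)) (𝓝[<] T) (𝓝[>] 0) := by
    refine tendsto_nhdsWithin_iff.2 ⟨?_, ?_⟩
    · have : Continuous fun t => √(T - t) := by fun_prop
      simpa using this.continuousWithinAt (s := Iio T) (x := T) |>.tendsto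
    · filter_upwards [self_mem_nhdsWithin] with t ht
      exact sqrt_pos.2 (sub_pos.2 ht)
  simpa [div_eq_mul_inv] using (tendsto_inv_nhdsGT_zero.comp this).const_mul_atTop hc

section

variable {h h' : ℝ → ℝ} {C a T : ℝ}

theorem monotoneOn_inv_sq_add_of_deriv_le_mul_cube {s : Set ℝ} (hs : Convex ℝ s)
    (hderiv : ∀ t ∈ s, HasDerivAt h (h' t) t) (hpos : ∀ t ∈ s, 0 < h t)
    (hineq : ∀ t ∈ s, h' t ≤ C * h t ^ 3) :
    MonotoneOn (fun t => (h t ^ 2)⁻¹ + 2 * C * t) s := by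
  have hφ : ∀ t ∈ s, HasDerivAt (fun t => (h t ^ 2)⁻¹ + 2 * C * t)
      (-(2 * h t ^ 1 * h' t) / (h t ^ 2) ^ 2 + 2 * C) t := fun t ht =>
    (((hderiv t ht).pow 2).inv (pow_ne_zero 2 (hpos t ht).ne')).add
      ((hasDerivAt_id t).const_mul (2 * C) |>.congr_deriv (mul_one _))
  refine monotoneOn_of_hasDerivWithinAt_nonneg hs
    (fun t ht => (hφ t ht).continuousAt.continuousWithinAt)
    (fun t ht => (hφ t (interior_subset ht)).hasDerivWithinAt) fun t ht => ?_
  have ht := interior_subset ht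
  have hpos := hpos t ht
  have hquot : 2 * h t ^ 1 * h' t / (h t ^ 2) ^ 2 ≤ 2 * C := by
    rw [div_le_iff₀ (by positivity)]
    have := mul_le_mul_of_nonneg_left (hineq t ht) hpos.le
    linarith
  rw [neg_div]
  linarith

theorem inv_sq_le_of_deriv_le_mul_cube (hderiv : ∀ t ∈ Ico a T, HasDerivAt h (h' t) t)
    (hpos : ∀ t ∈ Ico a T, 0 < h t) (hineq : ∀ t ∈ Ico a T, h' t ≤ C * h t ^ 3)
    (hfreq : ∀ M : ℝ, ∃ᶠ t in 𝓝[<] T, M < h t) {t : ℝ} (ht : t ∈ Ico a T) :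
    (h t ^ 2)⁻¹ ≤ 2 * C * (T - t) := by
  have hmono := monotoneOn_inv_sq_add_of_deriv_le_mul_cube (convex_Ico a T) hderiv hpos hineq
  -- stands for a sequence `r_j → T` along which `h r_j → ∞`
  let l := 𝓝[<] T ⊓ comap h atTop
  have : l.NeBot := by
    refine inf_neBot_iff_frequently_right.2 fun {p} hp => ?_
    obtain ⟨M, -, hM⟩ := (atTop_basis_Ioi.comap h).eventually_iff.1 hp
    exact (hfreq M).mono fun s hs => hM hs
  have hlim : Tendsto (fun s => (h s ^ 2)⁻¹ + 2 * C * (s - t)) l (𝓝 (0 + 2 * C * (T - t))) :=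
    (tendsto_inv_atTop_zero.comp <| (tendsto_pow_atTop two_ne_zero).comp <|
      tendsto_comap.mono_left inf_le_right).add <|
      ((tendsto_id.mono_left (inf_le_left.trans nhdsWithin_le_nhds)).sub_const t).const_mul _
  refine zero_add (2 * C * (T - t)) ▸ ge_of_tendsto hlim ?_
  filter_upwards [inf_le_left (a := 𝓝[<] T) (Ioo_mem_nhdsLT ht.2)] with s hs
  have := hmono ht ⟨ht.1.trans hs.1.le, hs.2⟩ hs.1.le
  dsimp only at this
  linarith

theorem exists_pos_le_of_tendsto_atTop {g : ℝ → ℝ} (hcont : ContinuousOn g (Ico a T))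
    (hpos : ∀ t ∈ Ico a T, 0 < g t) (hlim : Tendsto g (𝓝[<] T) atTop) :
    ∃ m > 0, ∀ t ∈ Ico a T, m ≤ g t := by
  obtain ⟨b, hbT, hb⟩ := mem_nhdsLT_iff_exists_Ioo_subset.1 (hlim.eventually_ge_atTop 1)
  have hsub : Icc a b ⊆ Ico a T := Icc_subset_Ico_right hbT
  obtain ⟨m, hm, hmg⟩ := isCompact_Icc.exists_forall_le' (hcont.mono hsub)
    fun t ht => hpos t (hsub ht)
  refine ⟨min m 1, lt_min hm one_pos, fun t ht => ?_⟩
  rcases le_or_gt t b with htb | hbt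
  · exact (min_le_left _ _).trans (hmg t ⟨ht.1, htb⟩)
  · exact (min_le_right _ _).trans (hb ⟨hbt, ht.2⟩)

end

/-- Blow-up rate: a positive `C¹` function `g` on `[0,T)` with `g' ≤ C(1+g)³` (`C > 0`)
whose limsup as `t → T⁻` is `+∞` actually tends to `+∞` as `t → T⁻`, and satisfies
`g(t) ≥ c/√(T−t)` on `[0,T)` for some constant `c > 0`. -/
theorem blowup_rate (C T : ℝ) (hC : 0 < C) (hT : 0 < T)
    (g g' : ℝ → ℝ)
    (hpos : ∀ t ∈ Set.Ico (0:ℝ) T, 0 < g t)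
    (hderiv : ∀ t ∈ Set.Ico (0:ℝ) T, HasDerivAt g (g' t) t)
    (hineq : ∀ t ∈ Set.Ico (0:ℝ) T, g' t ≤ C * (1 + g t) ^ 3)
    (hlimsup : ∀ M : ℝ, ∃ᶠ t in nhdsWithin T (Set.Iio T), M < g t) :
    Tendsto g (nhdsWithin T (Set.Iio T)) atTop ∧
    ∃ c > 0, ∀ t ∈ Set.Ico (0:ℝ) T, c / Real.sqrt (T - t) ≤ g t := by
  have hpos_one_add : ∀ t ∈ Ico 0 T, 0 < 1 + g t := fun t ht => by linarith [hpos t ht]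
  have hfreq (M : ℝ) : ∃ᶠ t in 𝓝[<] T, M < 1 + g t :=
    (hlimsup M).mono fun t ht => by linarith
  set a := (√(2 * C))⁻¹
  have ha : 0 < a := by positivity
  have hlower : ∀ t ∈ Ico 0 T, a / √(T - t) ≤ 1 + g t := fun t ht => by
    have := inv_sqrt_le_of_inv_sq_le (hpos_one_add t ht) <|
      inv_sq_le_of_deriv_le_mul_cube (fun t ht => (hderiv t ht).const_add 1) hpos_one_add hineq hfreq ht
    rwa [sqrt_mul (by positivity : (0:ℝ) ≤ 2 * C), mul_inv, ← div_eq_mul_inv] at this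
  have hlim : Tendsto g (𝓝[<] T) atTop := by
    have : Tendsto (fun t => 1 + g t) (𝓝[<] T) atTop :=
      tendsto_atTop_mono' _ (eventually_mem_set.2 (Ico_mem_nhdsLT hT) |>.mono hlower)
        (tendsto_div_sqrt_sub_nhdsLT ha T)
    simpa using tendsto_atTop_add_const_left _ (-1) this
  obtain ⟨m, hm, hmg⟩ := exists_pos_le_of_tendsto_atTop
    (fun t ht => (hderiv t ht).continuousAt.continuousWithinAt) hpos hlim
  refine ⟨hlim, m / (1 + m) * a, by positivity, fun t ht => ?_⟩
  calc m / (1 + m) * a / √(T - t) = m / (1 + m) * (a / √(T - t)) := by ring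
    _ ≤ m / (1 + m) * (1 + g t) := by gcongr; exact hlower t ht
    _ ≤ g t := by
      rw [div_mul_eq_mul_div, div_le_iff₀ (by positivity)]
      nlinarith [hmg t ht]
end

section
/- At a regular triple junction (where Σk^i=0 and λ^i=(k^{i−1}−k^{i+1})/√3, indices mod 3), for any assignment of time derivatives k^i_t, the identity 3 Σ_{i=1}^3 λ^i k^i k^i_t = ∂_t ( Σ_{i=1}^3 λ^i (k^i)² ) holds, where ∂_t λ^i = (k^{i−1}_t − k^{i+1}_t)/√3. -/
open Real

/-- At a regular triple junction (`Σkⁱ = 0`, `λⁱ = (k^{i−1} − k^{i+1})/√3`, indices mod 3),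
for any time derivatives `kⁱ_t` with `Σkⁱ_t = 0` and corresponding
`∂_tλⁱ = (k^{i−1}_t − k^{i+1}_t)/√3`, the identity
`3 Σ λⁱ kⁱ kⁱ_t = ∂_t(Σ λⁱ (kⁱ)²)` holds. -/
theorem junction_boundary_identity
    (k kt lam lamt : Fin 3 → ℝ)
    (hk : k 0 + k 1 + k 2 = 0)
    (hkt : kt 0 + kt 1 + kt 2 = 0)
    (hlam : ∀ i : Fin 3, lam i = (k (i - 1) - k (i + 1)) / Real.sqrt 3)
    (hlamt : ∀ i : Fin 3, lamt i = (kt (i - 1) - kt (i + 1)) / Real.sqrt 3) :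
    3 * ∑ i : Fin 3, lam i * k i * kt i
      = ∑ i : Fin 3, (lamt i * k i ^ 2 + 2 * lam i * k i * kt i) := by
  simp only [Fin.sum_univ_three, hlam, hlamt]
  simp only [show (0:Fin 3) - 1 = 2 by decide, show (1:Fin 3) - 1 = 0 by decide,
    show (2:Fin 3) - 1 = 1 by decide, show (0:Fin 3) + 1 = 1 by decide,
    show (1:Fin 3) + 1 = 2 by decide, show (2:Fin 3) + 1 = 0 by decide]
  linear_combination (((k 2 - k 1) * kt 0 + (k 0 - k 2) * kt 1 + (k 1 - k 0) * kt 2)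
    / Real.sqrt 3) * hk
end

section
/- Let γ be a smooth regular curve in ℝ² satisfying the shrinker equation k + ⟨x,ν⟩ = 0 at every point (curvature vector plus normal component of position vanish). If γ passes through the origin at an interior point, then γ is contained in a straight line through the origin. -/
open Real

noncomputable section

/-- Euclidean scalar product on ℝ². -/
def dotE (p q : ℝ × ℝ) : ℝ := p.1 * q.1 + p.2 * q.2

/-- Speed `|c'|` (Euclidean norm) of a curve. -/
def speedC (c : ℝ → ℝ × ℝ) (x : ℝ) : ℝ :=
  Real.sqrt ((deriv c x).1 ^ 2 + (deriv c x).2 ^ 2)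

/-- Unit tangent vector `τ = c'/|c'|`. -/
def unitTangent (c : ℝ → ℝ × ℝ) (x : ℝ) : ℝ × ℝ := (speedC c x)⁻¹ • deriv c x

/-- Unit normal vector `ν = Rτ`, the π/2-rotation of the unit tangent. -/
def unitNormalC (c : ℝ → ℝ × ℝ) (x : ℝ) : ℝ × ℝ :=
  (-(unitTangent c x).2, (unitTangent c x).1)

/-- Signed curvature `k = (c' ∧ c'')/|c'|³` of a regular plane curve, so that the curvature
vector is `kν` and `k = ⟨∂_sτ, ν⟩`. -/
def curvC (c : ℝ → ℝ × ℝ) (x : ℝ) : ℝ :=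
  ((deriv c x).1 * (deriv (deriv c) x).2 - (deriv c x).2 * (deriv (deriv c) x).1)
    / (speedC c x) ^ 3

lemma linODE_zero {w φ : ℝ → ℝ} (hφ : Continuous φ)
    (hw : ∀ x, HasDerivAt w (φ x * w x) x) (x₀ : ℝ) (h0 : w x₀ = 0) :
    ∀ x, w x = 0 := by
  set Φ : ℝ → ℝ := fun x => ∫ t in x₀..x, φ t with hΦdef
  have hΦ : ∀ x, HasDerivAt Φ (φ x) x := fun x =>
    intervalIntegral.integral_hasDerivAt_right (hφ.intervalIntegrable _ _)
      (hφ.stronglyMeasurableAtFilter _ _) hφ.continuousAt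
  have hg : ∀ x, HasDerivAt (fun y => w y * Real.exp (-Φ y)) 0 x := by
    intro x
    have h : HasDerivAt (fun y => w y * Real.exp (-Φ y))
        (φ x * w x * Real.exp (-Φ x) + w x * (Real.exp (-Φ x) * -φ x)) x := (hw x).mul ((hΦ x).neg.exp)
    convert h using 1
    ring
  have hconst := is_const_of_deriv_eq_zero (f := fun y => w y * Real.exp (-Φ y))
    (fun x => (hg x).differentiableAt) (fun x => (hg x).deriv)
  intro x
  have h := hconst x x₀
  simp only [h0, zero_mul] at h
  exact (mul_eq_zero.mp h).resolve_right (Real.exp_ne_zero _)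

/-- A smooth regular plane curve satisfying the shrinker equation `k + ⟨x, ν⟩ = 0` at every
point which passes through the origin is contained in a straight line through the
origin. -/
theorem shrinker_through_origin_is_line
    (γ : ℝ → ℝ × ℝ) (hγ : ContDiff ℝ (⊤ : ℕ∞) γ) (hreg : ∀ x, deriv γ x ≠ 0)
    (hshrink : ∀ x, curvC γ x + dotE (γ x) (unitNormalC γ x) = 0)
    (x₀ : ℝ) (h0 : γ x₀ = 0) :
    ∃ u : ℝ × ℝ, u ≠ 0 ∧ ∀ x, ∃ r : ℝ, γ x = r • u := by
  have hγd : Differentiable ℝ γ := hγ.differentiable (by simp)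
  have hgi : ContDiff ℝ ((⊤ : ℕ∞) : WithTop ℕ∞) γ := hγ.of_le (by simp)
  have hDcd : ContDiff ℝ ((⊤ : ℕ∞) : WithTop ℕ∞) (deriv γ) := (contDiff_infty_iff_deriv.mp hgi).2
  have hDd : Differentiable ℝ (deriv γ) := hDcd.differentiable (by simp)
  set D : ℝ → ℝ × ℝ := deriv γ with hD
  set E : ℝ → ℝ × ℝ := deriv D with hE
  have hEc : Continuous E := ((contDiff_infty_iff_deriv.mp hDcd).2).continuous
  have hDc : Continuous D := hDcd.continuous
  have hγc : Continuous γ := hγ.continuous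
  have hdγ : ∀ x, HasDerivAt γ (D x) x := fun x => (hγd x).hasDerivAt
  have hdD : ∀ x, HasDerivAt D (E x) x := fun x => (hDd x).hasDerivAt
  have fst1 : ∀ x, HasDerivAt (fun y => (γ y).1) ((D x).1) x := fun x =>
    (ContinuousLinearMap.fst ℝ ℝ ℝ).hasFDerivAt.comp_hasDerivAt x (hdγ x)
  have snd1 : ∀ x, HasDerivAt (fun y => (γ y).2) ((D x).2) x := fun x =>
    (ContinuousLinearMap.snd ℝ ℝ ℝ).hasFDerivAt.comp_hasDerivAt x (hdγ x)
  have fst2 : ∀ x, HasDerivAt (fun y => (D y).1) ((E x).1) x := fun x =>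
    (ContinuousLinearMap.fst ℝ ℝ ℝ).hasFDerivAt.comp_hasDerivAt x (hdD x)
  have snd2 : ∀ x, HasDerivAt (fun y => (D y).2) ((E x).2) x := fun x =>
    (ContinuousLinearMap.snd ℝ ℝ ℝ).hasFDerivAt.comp_hasDerivAt x (hdD x)
  set s2 : ℝ → ℝ := fun x => (D x).1 ^ 2 + (D x).2 ^ 2 with hs2def
  have hs2 : ∀ x, 0 < s2 x := by
    intro x
    rcases eq_or_ne (D x).1 0 with h1 | h1
    · rcases eq_or_ne (D x).2 0 with h2 | h2
      · exact absurd (Prod.ext h1 h2) (hreg x)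
      · positivity
    · positivity
  have hs2c : Continuous s2 := by
    exact ((hDc.fst.pow 2).add (hDc.snd.pow 2))
  -- the shrinker equation in cross-product form
  have A : ∀ x, (D x).1 * (E x).2 - (D x).2 * (E x).1
      = s2 x * ((γ x).1 * (D x).2 - (γ x).2 * (D x).1) := by
    intro x
    have e := hshrink x
    have hs : 0 < Real.sqrt (s2 x) := Real.sqrt_pos.mpr (hs2 x)
    have hss : Real.sqrt (s2 x) ^ 2 = s2 x := Real.sq_sqrt (hs2 x).le
    simp only [curvC, dotE, unitNormalC, unitTangent, speedC, Prod.smul_fst, Prod.smul_snd,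
      smul_eq_mul, ← hD, ← hE, ← hs2def] at e
    have hs2ne : ((D x).1 ^ 2 + (D x).2 ^ 2) ≠ 0 := (hs2 x).ne'
    have hsne : Real.sqrt ((D x).1 ^ 2 + (D x).2 ^ 2) ≠ 0 := hs.ne'
    have hss' : Real.sqrt ((D x).1 ^ 2 + (D x).2 ^ 2) ^ 2 = (D x).1 ^ 2 + (D x).2 ^ 2 :=
      Real.sq_sqrt (by positivity)
    field_simp at e
    simp only [hs2def]
    apply mul_right_cancel₀ hs2ne
    linear_combination ((D x).1 ^ 2 + (D x).2 ^ 2) * e + ((D x).1 ^ 2 + (D x).2 ^ 2) *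
      ((γ x).1 * (D x).2 - (γ x).2 * (D x).1) * hss'
  -- Step 1: the angular momentum w = γ ∧ γ' vanishes identically
  set w : ℝ → ℝ := fun y => (γ y).1 * (D y).2 - (γ y).2 * (D y).1 with hwdef
  set φ : ℝ → ℝ := fun y =>
    ((γ y).1 * (D y).1 + (γ y).2 * (D y).2) + ((D y).1 * (E y).1 + (D y).2 * (E y).2) / s2 y
    with hφdef
  have hφc : Continuous φ := by
    apply Continuous.add
    · exact (hγc.fst.mul hDc.fst).add (hγc.snd.mul hDc.snd)
    · exact ((hDc.fst.mul hEc.fst).add (hDc.snd.mul hEc.snd)).div hs2c fun y => (hs2 y).ne'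
  have hdw : ∀ x, HasDerivAt w (φ x * w x) x := by
    intro x
    have h := ((fst1 x).mul (snd2 x)).sub ((snd1 x).mul (fst2 x))
    have hkey : φ x * w x
        = (D x).1 * (D x).2 + (γ x).1 * (E x).2
            - ((D x).2 * (D x).1 + (γ x).2 * (E x).1) := by
      have hA := A x
      have hne : (D x).1 ^ 2 + (D x).2 ^ 2 ≠ 0 := (hs2 x).ne'
      simp only [hφdef, hwdef, hs2def] at hA ⊢
      field_simp
      linear_combination (-((γ x).1 * (D x).1 + (γ x).2 * (D x).2)) * hA
    rw [hkey]
    exact h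
  have hw0 : ∀ x, w x = 0 := linODE_zero hφc hdw x₀ (by simp [hwdef, h0])
  -- hence the curvature vanishes identically
  have hcross : ∀ x, (D x).1 * (E x).2 - (D x).2 * (E x).1 = 0 := by
    intro x
    rw [A x]
    simp only [mul_eq_zero]
    exact Or.inr (hw0 x)
  -- Step 2: the tangent direction is constant
  set u : ℝ × ℝ := D x₀ with hudef
  have hu : u ≠ 0 := hreg x₀
  set ψ : ℝ → ℝ := fun y => ((D y).1 * (E y).1 + (D y).2 * (E y).2) / s2 y with hψdef
  have hψc : Continuous ψ :=
    ((hDc.fst.mul hEc.fst).add (hDc.snd.mul hEc.snd)).div hs2c fun y => (hs2 y).ne'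
  set hfun : ℝ → ℝ := fun y => (D y).1 * u.2 - (D y).2 * u.1 with hhdef
  have hdh : ∀ x, HasDerivAt hfun (ψ x * hfun x) x := by
    intro x
    have h := ((fst2 x).mul_const u.2).sub ((snd2 x).mul_const u.1)
    have hkey : ψ x * hfun x = (E x).1 * u.2 - (E x).2 * u.1 := by
      have hC := hcross x
      have hne : (D x).1 ^ 2 + (D x).2 ^ 2 ≠ 0 := (hs2 x).ne'
      simp only [hψdef, hhdef, hs2def] at hC ⊢
      field_simp
      linear_combination ((D x).1 * u.1 + (D x).2 * u.2) * hC
    rw [hkey]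
    exact h
  have hh0 : ∀ x, hfun x = 0 := by
    refine linODE_zero hψc hdh x₀ ?_
    simp only [hhdef, hudef]
    ring
  -- Step 3: γ ∧ u = 0
  have hdF : ∀ x, HasDerivAt (fun y => (γ y).1 * u.2 - (γ y).2 * u.1)
      ((fun _ : ℝ => (0 : ℝ)) x * ((γ x).1 * u.2 - (γ x).2 * u.1)) x := by
    intro x
    have h := ((fst1 x).mul_const u.2).sub ((snd1 x).mul_const u.1)
    have h2 : (D x).1 * u.2 - (D x).2 * u.1
        = (fun _ : ℝ => (0 : ℝ)) x * ((γ x).1 * u.2 - (γ x).2 * u.1) := by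
      rw [zero_mul]
      exact hh0 x
    rw [h2] at h
    exact h
  have hF0 : ∀ x, (γ x).1 * u.2 - (γ x).2 * u.1 = 0 := by
    refine linODE_zero continuous_const hdF x₀ ?_
    simp [h0]
  -- Conclusion
  have hu2 : 0 < u.1 ^ 2 + u.2 ^ 2 := by
    rcases eq_or_ne u.1 0 with h1 | h1
    · rcases eq_or_ne u.2 0 with h2 | h2
      · exact absurd (Prod.ext h1 h2) hu
      · positivity
    · positivity
  refine ⟨u, hu, fun x => ⟨((γ x).1 * u.1 + (γ x).2 * u.2) / (u.1 ^ 2 + u.2 ^ 2), ?_⟩⟩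
  have hF := hF0 x
  apply Prod.ext
  · simp only [Prod.smul_fst, smul_eq_mul]
    field_simp
    linear_combination u.2 * hF
  · simp only [Prod.smul_snd, smul_eq_mul]
    field_simp
    linear_combination (-u.1) * hF


end
end
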